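/- arXiv:2309.03847 — 4 statements merged into one kernel-verified Lean document; each statement's English description precedes it below -/
import Mathlib

section
/- Let k ≥ 1 be an integer, α ∈ (0,1), let f_1,…,f_k be probability measures on a measurable space Ω, let w ∈ Δ_k, and let g = ∑_{i=1}^k w_i·f_i. Then there exist γ ∈ [0,α), a probability measure h on Ω, a nonempty subset S ⊆ {1,…,k}, and weights (v_i)_{i∈S} with v_i ≥ α/k for all i ∈ S and ∑_{i∈S} v_i = 1, such that g = γ·h + (1−γ)·∑_{i∈S} v_i·f_i. -/
/-!
Call a component light if its weight is below `α / k`. At most `k` components are light, so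
their total mass `γ` is strictly less than `k · α / k = α < 1`; in particular some component is
heavy. The light part of `g` is `γ · h` for a probability measure `h`, and the heavy part is
`(1 - γ)` times the heavy weights divided by `1 - γ ≤ 1`, which keeps them at least `α / k`.
-/

open MeasureTheory Finset
open scoped ENNReal

section Renormalize

variable {ι M : Type*} [AddCommMonoid M] [Module ℝ≥0∞ M]

theorem ofReal_smul_sum_ofReal_div_smul (s : Finset ι) (w : ι → ℝ) (f : ι → M) {c : ℝ}
    (hc : 0 < c) :
    ENNReal.ofReal c • ∑ i ∈ s, ENNReal.ofReal (w i / c) • f i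
      = ∑ i ∈ s, ENNReal.ofReal (w i) • f i := by
  rw [smul_sum]
  refine sum_congr rfl fun i _ => ?_
  rw [smul_smul, ← ENNReal.ofReal_mul hc.le, mul_div_cancel₀ _ hc.ne']

end Renormalize

section Mixture

variable {Ω ι : Type*} [MeasurableSpace Ω]

theorem isProbabilityMeasure_sum_ofReal_smul (s : Finset ι) (f : ι → Measure Ω)
    (hf : ∀ i, IsProbabilityMeasure (f i)) {w : ι → ℝ} (hw : ∀ i ∈ s, 0 ≤ w i)
    (hw1 : ∑ i ∈ s, w i = 1) :
    IsProbabilityMeasure (∑ i ∈ s, ENNReal.ofReal (w i) • f i) := by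
  constructor
  simp only [Measure.coe_finsetSum, Finset.sum_apply, Measure.smul_apply, measure_univ,
    smul_eq_mul, mul_one]
  rw [← ENNReal.ofReal_sum_of_nonneg hw, hw1, ENNReal.ofReal_one]

theorem exists_isProbabilityMeasure_ofReal_sum_smul_eq [Nonempty ι] (s : Finset ι)
    (f : ι → Measure Ω) (hf : ∀ i, IsProbabilityMeasure (f i)) {w : ι → ℝ}
    (hw : ∀ i ∈ s, 0 ≤ w i) :
    ∃ h : Measure Ω, IsProbabilityMeasure h ∧
      ENNReal.ofReal (∑ i ∈ s, w i) • h = ∑ i ∈ s, ENNReal.ofReal (w i) • f i := by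
  rcases (sum_nonneg hw).eq_or_lt with hc | hc
  · have hw0 : ∀ i ∈ s, w i = 0 := (sum_eq_zero_iff_of_nonneg hw).mp hc.symm
    refine ⟨f (Classical.arbitrary ι), hf _, ?_⟩
    rw [← hc, ENNReal.ofReal_zero, zero_smul, eq_comm]
    exact sum_eq_zero fun i hi => by rw [hw0 i hi, ENNReal.ofReal_zero, zero_smul]
  · refine ⟨_, isProbabilityMeasure_sum_ofReal_smul s f hf (w := fun i => w i / ∑ j ∈ s, w j)
      (fun i hi => div_nonneg (hw i hi) hc.le) (by rw [← sum_div, div_self hc.ne']),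
      ofReal_smul_sum_ofReal_div_smul s w f hc⟩

end Mixture

theorem sum_filter_lt_lt_card_mul {ι : Type*} [Fintype ι] [Nonempty ι] (w : ι → ℝ) {t : ℝ}
    (ht : 0 < t) : ∑ i with w i < t, w i < Fintype.card ι * t := by
  rw [sum_filter, ← nsmul_eq_mul, ← card_univ, ← sum_const]
  refine sum_lt_sum_of_nonempty univ_nonempty fun i _ => ?_
  split_ifs with hi
  exacts [hi, ht]

theorem dense_mixture_approximation
    {Ω : Type*} [MeasurableSpace Ω] (k : ℕ) (hk : 1 ≤ k) (α : ℝ)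
    (hα : α ∈ Set.Ioo (0 : ℝ) 1)
    (f : Fin k → Measure Ω) (hf : ∀ i, IsProbabilityMeasure (f i))
    (w : Fin k → ℝ) (hw : ∀ i, 0 ≤ w i) (hw1 : ∑ i, w i = 1) :
    ∃ (γ : ℝ), γ ∈ Set.Ico (0 : ℝ) α ∧
    ∃ (h : Measure Ω), IsProbabilityMeasure h ∧
    ∃ (S : Finset (Fin k)), S.Nonempty ∧
    ∃ (v : Fin k → ℝ),
      (∀ i ∈ S, α / k ≤ v i) ∧ (∑ i ∈ S, v i = 1) ∧
      (∑ i, ENNReal.ofReal (w i) • f i)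
        = ENNReal.ofReal γ • h
          + ENNReal.ofReal (1 - γ) • (∑ i ∈ S, ENNReal.ofReal (v i) • f i) := by
  have : Nonempty (Fin k) := ⟨⟨0, hk⟩⟩
  have hk0 : (0 : ℝ) < k := by exact_mod_cast hk
  set γ := ∑ i with w i < α / k, w i
  set S := univ.filter fun i => ¬w i < α / k
  have hγ_lt : γ < α := by
    simpa [mul_div_cancel₀ α hk0.ne'] using
      sum_filter_lt_lt_card_mul w (div_pos hα.1 hk0)
  have hS_sum : ∑ i ∈ S, w i = 1 - γ := by
    rw [← hw1, ← sum_filter_add_sum_filter_not univ fun i => w i < α / k, add_sub_cancel_left]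
  have hγ_nonneg : 0 ≤ γ := sum_nonneg fun i _ => hw i
  have hγ_one : 0 < 1 - γ := by linarith [hα.2]
  obtain ⟨h, hh, hγh⟩ := exists_isProbabilityMeasure_ofReal_sum_smul_eq
    (univ.filter fun i => w i < α / k) f hf fun i _ => hw i
  refine ⟨γ, ⟨hγ_nonneg, hγ_lt⟩, h, hh, S,
    nonempty_of_sum_ne_zero (hS_sum ▸ hγ_one.ne'), fun i => w i / (1 - γ), fun i hi => ?_,
    by rw [← sum_div, hS_sum, div_self hγ_one.ne'], ?_⟩
  · exact (not_lt.mp (mem_filter.mp hi).2).trans (le_div_self (hw i) hγ_one (by linarith))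
  · rw [hγh, ofReal_smul_sum_ofReal_div_smul S w f hγ_one,
      sum_filter_add_sum_filter_not]
end

section
/- Let 0 < α < γ < 1, let k, t ≥ 1 be integers, and let F be a set of probability measures on a measurable space Ω. Suppose there exists C ⊆ F such that: (i) for every f ∈ F there is c ∈ C with dTV(f,c) ≤ α, and (ii) for every f ∈ F, the set {c ∈ C : dTV(f,c) ≤ γ} has at most t elements. Then there exists J ⊆ Δ_k × F^k such that: (i) for every (w, f) ∈ Δ_k × F^k there is (w', f') ∈ J with κ_mix((w,f),(w',f')) ≤ α, and (ii) for every (w, f) ∈ Δ_k × F^k, the set {(w',f') ∈ J : κ_mix((w,f),(w',f')) ≤ γ} has at most k!·t^k·⌈k/α⌉^k elements. -/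
open MeasureTheory

/-- Total variation distance between two measures:
`dTV(μ,ν) = sup` over measurable sets `A` of `|μ(A) − ν(A)|`. -/
noncomputable def tvDist {Ω : Type*} [MeasurableSpace Ω] (μ ν : Measure Ω) : ℝ :=
  ⨆ A : {A : Set Ω // MeasurableSet A}, |(μ A).toReal - (ν A).toReal|

/-- The probability simplex `Δ_k`. -/
def probSimplex (k : ℕ) : Set (Fin k → ℝ) :=
  {w | (∀ i, 0 ≤ w i) ∧ ∑ i, w i = 1}

/-- The class of `k`-mixtures over a class `F` of measures, represented as
pairs of a weight vector in the simplex and a tuple of components from `F`. -/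
def kMixtures {Ω : Type*} [MeasurableSpace Ω] (k : ℕ) (F : Set (Measure Ω)) :
    Set ((Fin k → ℝ) × (Fin k → Measure Ω)) :=
  {p | p.1 ∈ probSimplex k ∧ ∀ i, p.2 i ∈ F}

/-- The component-wise distance `κ_mix` between two `k`-mixtures:
the min over permutations `π` of the max over components of
`max (k·|w_i − w'_{π(i)}|, dTV(f_i, f'_{π(i)}))`. -/
noncomputable def kappaMix {Ω : Type*} [MeasurableSpace Ω] (k : ℕ)
    (p q : (Fin k → ℝ) × (Fin k → Measure Ω)) : ℝ :=
  ⨅ π : Equiv.Perm (Fin k), ⨆ i : Fin k,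
    max ((k : ℝ) * |p.1 i - q.1 (π i)|) (tvDist (p.2 i) (q.2 (π i)))

/-
Take for `J` the mixtures with weights on the grid `Δ_k ∩ (1/m)ℕ^k`, `m = ⌈k/α⌉`, and components
in `C`. A weight vector can be rounded to the grid, keeping its sum, with error at most
`1/m ≤ α/k` per coordinate, and each component can be replaced by an `α`-close element of `C`.
If `q ∈ J` is `γ`-close to `p`, then for one of the `k!` permutations `π` every `q_{π i}` is one
of the at most `t` elements of `C` that are `γ`-close to `p_i`, and the weights of `q` are one
of the at most `(m+1)^(k-1) ≤ m^k` grid points (as `k ≤ m`).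
-/
open Finset

theorem exists_nat_sum_eq_abs_sub_le_one {ι : Type*} [Fintype ι] {x : ι → ℝ}
    (hx : ∀ i, 0 ≤ x i) {N : ℕ} (hN : ∑ i, x i = N) :
    ∃ n : ι → ℕ, ∑ i, n i = N ∧ ∀ i, |x i - n i| ≤ 1 := by
  classical
  set b : ι → ℕ := fun i => ⌊x i⌋₊
  have hb_le (i : ι) : (b i : ℝ) ≤ x i := Nat.floor_le (hx i)
  have hb_lt (i : ι) : x i < b i + 1 := Nat.lt_floor_add_one _
  have hsum_le : ∑ i, b i ≤ N := by
    have : ∑ i, (b i : ℝ) ≤ N := hN ▸ sum_le_sum fun i _ => hb_le i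
    exact_mod_cast this
  have hdeficit : N - ∑ i, b i ≤ #(univ : Finset ι) := by
    have : (N : ℝ) ≤ ∑ i, ((b i : ℝ) + 1) := hN ▸ sum_le_sum fun i _ => (hb_lt i).le
    rw [sum_add_distrib, sum_const, nsmul_one] at this
    have : N ≤ ∑ i, b i + #(univ : Finset ι) := by exact_mod_cast this
    omega
  -- round every coordinate down, then round up `N - ∑ i, b i` of them
  obtain ⟨S, -, hS⟩ := exists_subset_card_eq hdeficit
  refine ⟨fun i => b i + if i ∈ S then 1 else 0, ?_, fun i => ?_⟩
  · rw [sum_add_distrib, sum_boole, filter_mem_eq_inter, univ_inter, hS, Nat.cast_id]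
    omega
  · simp only [abs_le]
    split_ifs <;> push_cast <;> constructor <;> linarith [hb_le i, hb_lt i]

theorem Nat.succ_pow_le_succ_mul_pow {m n : ℕ} (h : n ≤ m) : (m + 1) ^ n ≤ (n + 1) * m ^ n := by
  induction n with
  | zero => simp
  | succ n ih =>
    calc (m + 1) ^ (n + 1) = (m + 1) * (m + 1) ^ n := pow_succ' ..
      _ ≤ (m + 1) * ((n + 1) * m ^ n) := Nat.mul_le_mul_left _ (ih (by omega))
      _ ≤ (n + 1 + 1) * m ^ (n + 1) := by rw [pow_succ]; nlinarith [Nat.zero_le (m ^ n)]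

theorem Finset.Nat.card_antidiagonalTuple_le (k m : ℕ) :
    #(antidiagonalTuple k m) ≤ (m + 1) ^ (k - 1) := by
  cases k with
  | zero => exact card_le_one_of_subsingleton _
  | succ k =>
    have hsum {n : Fin (k + 1) → ℕ} (hn : n ∈ antidiagonalTuple (k + 1) m) :
        n 0 + ∑ i, Fin.tail n i = m := by
      rwa [mem_antidiagonalTuple, Fin.sum_univ_succ] at hn
    calc #(antidiagonalTuple (k + 1) m)
        ≤ #(Fintype.piFinset fun _ : Fin k => range (m + 1)) := by
          refine card_le_card_of_injOn Fin.tail (fun n hn => ?_) fun n hn n' hn' htail => ?_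
          · simp only [mem_coe, Fintype.mem_piFinset, mem_range]
            intro i
            have := single_le_sum (fun j _ => Nat.zero_le (Fin.tail n j)) (mem_univ i)
            have := hsum hn
            omega
          · have h0 : n 0 = n' 0 := by
              have := hsum hn; have := hsum hn'; rw [htail] at *; omega
            rw [← Fin.cons_self_tail n, ← Fin.cons_self_tail n', h0, htail]
      _ = (m + 1) ^ k := by simp

noncomputable def simplexGrid (k m : ℕ) : Finset (Fin k → ℝ) :=
  (Nat.antidiagonalTuple k m).image fun n i => (n i : ℝ) / m

section simplexGrid

variable {k m : ℕ}

theorem simplexGrid_subset_probSimplex (hm : m ≠ 0) :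
    (simplexGrid k m : Set (Fin k → ℝ)) ⊆ probSimplex k := by
  intro w hw
  obtain ⟨n, hn, rfl⟩ := mem_image.1 (mem_coe.1 hw)
  refine ⟨fun i => by positivity, ?_⟩
  rw [← sum_div, ← Nat.cast_sum, Nat.mem_antidiagonalTuple.1 hn, div_self (by exact_mod_cast hm)]

theorem exists_mem_simplexGrid_abs_sub_le (hm : m ≠ 0) {w : Fin k → ℝ}
    (hw : w ∈ probSimplex k) : ∃ w' ∈ simplexGrid k m, ∀ i, |w i - w' i| ≤ 1 / m := by
  have hm' : (0 : ℝ) < m := by positivity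
  obtain ⟨n, hn, hround⟩ := exists_nat_sum_eq_abs_sub_le_one (x := fun i => m * w i)
    (fun i => mul_nonneg hm'.le (hw.1 i)) (by rw [← mul_sum, hw.2, mul_one])
  refine ⟨fun i => (n i : ℝ) / m, mem_image_of_mem _ (Nat.mem_antidiagonalTuple.2 hn), fun i => ?_⟩
  have hscale : w i - n i / m = (m * w i - n i) / m := by field_simp
  rw [hscale, abs_div, abs_of_pos hm']
  gcongr
  exact hround i

theorem card_simplexGrid_le (hkm : k ≤ m) : #(simplexGrid k m) ≤ m ^ k :=
  card_image_le.trans <| (Nat.card_antidiagonalTuple_le k m).trans <| by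
    cases k with
    | zero => simp
    | succ k =>
      calc (m + 1) ^ (k + 1 - 1) ≤ (k + 1) * m ^ k := Nat.succ_pow_le_succ_mul_pow (by omega)
        _ ≤ m ^ (k + 1) := by rw [pow_succ']; exact Nat.mul_le_mul_right _ hkm

end simplexGrid

theorem Real.iInf_iSup_le_iff {ι κ : Type*} [Finite ι] [Nonempty ι] [Finite κ]
    {f : ι → κ → ℝ} {r : ℝ} (hr : 0 ≤ r) : ⨅ a, ⨆ b, f a b ≤ r ↔ ∃ a, ∀ b, f a b ≤ r := by
  constructor
  · intro h
    obtain ⟨a, ha⟩ := exists_eq_ciInf_of_finite (f := fun a => ⨆ b, f a b)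
    exact ⟨a, fun b => (le_ciSup (Set.finite_range _).bddAbove b).trans (ha.trans_le h)⟩
  · rintro ⟨a, ha⟩
    exact (ciInf_le (Set.finite_range _).bddBelow a).trans (Real.iSup_le ha hr)

theorem kappaMix_le_iff {Ω : Type*} [MeasurableSpace Ω] {k : ℕ}
    {p q : (Fin k → ℝ) × (Fin k → Measure Ω)} {r : ℝ} (hr : 0 ≤ r) :
    kappaMix k p q ≤ r ↔ ∃ π : Equiv.Perm (Fin k),
      ∀ i, max ((k : ℝ) * |p.1 i - q.1 (π i)|) (tvDist (p.2 i) (q.2 (π i))) ≤ r :=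
  Real.iInf_iSup_le_iff hr

theorem card_biUnion_perm_piFinset_le {ι β : Type*} [Fintype ι] [DecidableEq ι] [DecidableEq β]
    {D : ι → Finset β} {t : ℕ} (hD : ∀ i, #(D i) ≤ t) :
    #(univ.biUnion fun π : Equiv.Perm ι => Fintype.piFinset fun j => D (π.symm j)) ≤
      (Fintype.card ι).factorial * t ^ Fintype.card ι := by
  refine card_biUnion_le.trans ?_
  rw [← Fintype.card_perm, ← smul_eq_mul, ← card_univ, ← sum_const]
  refine sum_le_sum fun π _ => ?_
  rw [Fintype.card_piFinset, ← card_univ]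
  exact prod_le_pow_card _ _ _ fun j _ => hD _

theorem finite_and_ncard_le_card_of_subset {α : Type*} {s : Set α} {T : Finset α}
    (h : s ⊆ T) : s.Finite ∧ s.ncard ≤ #T :=
  ⟨T.finite_toSet.subset h, (Set.ncard_le_ncard h T.finite_toSet).trans_eq (Set.ncard_coe_finset T)⟩

theorem div_natCeil_div_le {x α : ℝ} (hα : 0 < α) : x / ⌈x / α⌉₊ ≤ α := by
  rcases (Nat.zero_le ⌈x / α⌉₊).eq_or_lt with h | h
  · rw [← h, Nat.cast_zero, div_zero]
    exact hα.le
  · rw [div_le_iff₀ (by exact_mod_cast h), mul_comm, ← div_le_iff₀ hα]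
    exact Nat.le_ceil _

section mixtureNet

variable {Ω : Type*} [MeasurableSpace Ω]

def mixtureNet (k m : ℕ) (C : Set (Measure Ω)) : Set ((Fin k → ℝ) × (Fin k → Measure Ω)) :=
  (simplexGrid k m : Set (Fin k → ℝ)) ×ˢ Set.univ.pi fun _ => C

variable {k m : ℕ} {C : Set (Measure Ω)}

theorem mixtureNet_subset_kMixtures {F : Set (Measure Ω)} (hm : m ≠ 0) (hCF : C ⊆ F) :
    mixtureNet k m C ⊆ kMixtures k F :=
  fun _ ⟨hw, hc⟩ => ⟨simplexGrid_subset_probSimplex hm hw, fun i => hCF (hc i trivial)⟩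

theorem exists_mem_mixtureNet_kappaMix_le {F : Set (Measure Ω)} {α : ℝ} (hα : 0 ≤ α)
    (hm : m ≠ 0) (hkm : (k : ℝ) / m ≤ α) (hcover : ∀ f ∈ F, ∃ c ∈ C, tvDist f c ≤ α)
    {p : (Fin k → ℝ) × (Fin k → Measure Ω)} (hp : p ∈ kMixtures k F) :
    ∃ q ∈ mixtureNet k m C, kappaMix k p q ≤ α := by
  choose c hcC hc using fun i => hcover (p.2 i) (hp.2 i)
  obtain ⟨w, hw, hpw⟩ := exists_mem_simplexGrid_abs_sub_le hm hp.1
  refine ⟨(w, c), ⟨hw, fun i _ => hcC i⟩, (kappaMix_le_iff hα).2 ⟨1, fun i => max_le ?_ (hc i)⟩⟩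
  calc (k : ℝ) * |p.1 i - w i| ≤ k * (1 / m) := by gcongr; exact hpw i
    _ ≤ α := by rwa [mul_one_div]

theorem finite_and_ncard_mixtureNet_kappaMix_le {γ : ℝ} {t : ℕ} (hγ : 0 ≤ γ) (hkm : k ≤ m)
    {p : (Fin k → ℝ) × (Fin k → Measure Ω)}
    (hsmall : ∀ i, ({c ∈ C | tvDist (p.2 i) c ≤ γ}).Finite ∧
      ({c ∈ C | tvDist (p.2 i) c ≤ γ}).ncard ≤ t) :
    ({q ∈ mixtureNet k m C | kappaMix k p q ≤ γ}).Finite ∧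
      ({q ∈ mixtureNet k m C | kappaMix k p q ≤ γ}).ncard ≤ k.factorial * t ^ k * m ^ k := by
  classical
  choose hD hDt using hsmall
  set U := univ.biUnion fun π : Equiv.Perm (Fin k) =>
    Fintype.piFinset fun j => (hD (π.symm j)).toFinset
  have hsub : {q ∈ mixtureNet k m C | kappaMix k p q ≤ γ} ⊆ ↑(simplexGrid k m ×ˢ U) := by
    rintro q ⟨⟨hw, hc⟩, hq⟩
    obtain ⟨π, hπ⟩ := (kappaMix_le_iff hγ).1 hq
    simp only [U, coe_product, Set.mem_prod, mem_coe, mem_biUnion, mem_univ, true_and,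
      Fintype.mem_piFinset, Set.Finite.mem_toFinset]
    refine ⟨hw, π, fun j => ⟨hc _ trivial, ?_⟩⟩
    simpa using (le_max_right _ _).trans (hπ (π.symm j))
  have hU : #U ≤ k.factorial * t ^ k := by
    simpa using card_biUnion_perm_piFinset_le fun i =>
      (Set.ncard_eq_toFinset_card _ (hD i)).symm.trans_le (hDt i)
  obtain ⟨hfin, hcard⟩ := finite_and_ncard_le_card_of_subset hsub
  refine ⟨hfin, hcard.trans ?_⟩
  rw [card_product, mul_comm]
  exact Nat.mul_le_mul hU (card_simplexGrid_le hkm)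

end mixtureNet

theorem kMixtures_locally_small_cover_general
    {Ω : Type*} [MeasurableSpace Ω]
    (α γ : ℝ) (hα : 0 < α) (hαγ : α < γ) (hγ : γ < 1)
    (k t : ℕ) (hk : 1 ≤ k)
    (F : Set (Measure Ω))
    (C : Set (Measure Ω)) (hCF : C ⊆ F)
    (hcover : ∀ f ∈ F, ∃ c ∈ C, tvDist f c ≤ α)
    (hsmall : ∀ f ∈ F, ({c ∈ C | tvDist f c ≤ γ}).Finite ∧
              ({c ∈ C | tvDist f c ≤ γ}).ncard ≤ t) :
    ∃ J ⊆ kMixtures k F,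
      (∀ p ∈ kMixtures k F, ∃ q ∈ J, kappaMix k p q ≤ α) ∧
      (∀ p ∈ kMixtures k F,
        ({q ∈ J | kappaMix k p q ≤ γ}).Finite ∧
        ({q ∈ J | kappaMix k p q ≤ γ}).ncard
          ≤ Nat.factorial k * t ^ k * (⌈(k : ℝ) / α⌉₊) ^ k) := by
  set m := ⌈(k : ℝ) / α⌉₊
  have hkm : k ≤ m := Nat.cast_le.1 <|
    (le_div_self (Nat.cast_nonneg k) hα (by linarith)).trans (Nat.le_ceil _)
  have hm : m ≠ 0 := by omega
  exact ⟨mixtureNet k m C, mixtureNet_subset_kMixtures hm hCF,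
    fun p hp => exists_mem_mixtureNet_kappaMix_le hα.le hm
      (div_natCeil_div_le hα) hcover hp,
    fun p hp => finite_and_ncard_mixtureNet_kappaMix_le (hα.trans hαγ).le hkm
      fun i => hsmall (p.2 i) (hp.2 i)⟩

theorem kMixtures_locally_small_cover
    {Ω : Type*} [MeasurableSpace Ω]
    (α γ : ℝ) (hα : 0 < α) (hαγ : α < γ) (hγ : γ < 1)
    (k t : ℕ) (hk : 1 ≤ k) (ht : 1 ≤ t)
    (F : Set (Measure Ω)) (hF : ∀ f ∈ F, IsProbabilityMeasure f)
    (C : Set (Measure Ω)) (hCF : C ⊆ F)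
    (hcover : ∀ f ∈ F, ∃ c ∈ C, tvDist f c ≤ α)
    (hsmall : ∀ f ∈ F, ({c ∈ C | tvDist f c ≤ γ}).Finite ∧
              ({c ∈ C | tvDist f c ≤ γ}).ncard ≤ t) :
    ∃ J ⊆ kMixtures k F,
      (∀ p ∈ kMixtures k F, ∃ q ∈ J, kappaMix k p q ≤ α) ∧
      (∀ p ∈ kMixtures k F,
        ({q ∈ J | kappaMix k p q ≤ γ}).Finite ∧
        ({q ∈ J | kappaMix k p q ≤ γ}).ncard
          ≤ Nat.factorial k * t ^ k * (⌈(k : ℝ) / α⌉₊) ^ k) :=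
  kMixtures_locally_small_cover_general α γ hα hαγ hγ k t hk F C hCF hcover hsmall
end

section
/- Let c₁, c₂ ≥ 1 be real numbers and let β ∈ (0,1]. Define β' = β / (2·e·c₁·log(e·c₁·c₂/β)), where e is Euler's number and log is the natural logarithm. Then β' ≤ β/(2·e·c₁), β/(2·e·c₁) ≤ 1/(e·c₁), and c₁·β'·log(c₂/β') ≤ β. -/
/-! With `A = e c₁ c₂ / β` and `L = log A` we have `β' = β / (2 e c₁ L)` and `c₂ / β' = 2 L A`,
so `log (c₂ / β') = log (2 L) + L ≤ 3 L ≤ 2 e L`, and `c₁ β' · 2 e L = β`.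
Since `c₁ c₂ ≥ 1 ≥ β`, we have `A ≥ e`, i.e. `L ≥ 1`, which gives the first inequality. -/

open Real

lemma Real.one_le_log_exp_one_mul {x : ℝ} (hx : 1 ≤ x) : 1 ≤ log (exp 1 * x) := by
  rw [log_mul (exp_pos 1).ne' (by linarith), log_exp]
  linarith [log_nonneg hx]

lemma Real.log_two_mul_add_self_le {L : ℝ} (hL : 0 < L) : log (2 * L) + L ≤ 2 * exp 1 * L := by
  have h2e : 2 ≤ exp 1 := by linarith [add_one_le_exp (1 : ℝ)]
  nlinarith [log_le_sub_one_of_pos (by positivity : 0 < 2 * L), mul_le_mul_of_nonneg_right h2e hL.le]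

lemma mul_mul_log_div_le_of_log_pos {c₁ c₂ β : ℝ} (hc₁ : 0 < c₁) (hc₂ : 0 < c₂) (hβ : 0 < β)
    (hL : 0 < log (exp 1 * c₁ * c₂ / β)) :
    c₁ * (β / (2 * exp 1 * c₁ * log (exp 1 * c₁ * c₂ / β))) *
      log (c₂ / (β / (2 * exp 1 * c₁ * log (exp 1 * c₁ * c₂ / β)))) ≤ β := by
  set A := exp 1 * c₁ * c₂ / β
  set L := log A
  have hA : 0 < A := by positivity
  have hlog : log (c₂ / (β / (2 * exp 1 * c₁ * L))) = log (2 * L) + L := by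
    rw [show c₂ / (β / (2 * exp 1 * c₁ * L)) = 2 * L * A by simp only [A]; field_simp,
      log_mul (by positivity) hA.ne']
  calc c₁ * (β / (2 * exp 1 * c₁ * L)) * log (c₂ / (β / (2 * exp 1 * c₁ * L)))
      ≤ c₁ * (β / (2 * exp 1 * c₁ * L)) * (2 * exp 1 * L) := by
        rw [hlog]
        gcongr
        exact log_two_mul_add_self_le hL
    _ = β := by field_simp

theorem failure_prob_claim
    (c₁ c₂ β : ℝ) (hc₁ : 1 ≤ c₁) (hc₂ : 1 ≤ c₂) (hβ : β ∈ Set.Ioc (0 : ℝ) 1) :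
    β / (2 * Real.exp 1 * c₁ * Real.log (Real.exp 1 * c₁ * c₂ / β))
        ≤ β / (2 * Real.exp 1 * c₁) ∧
    β / (2 * Real.exp 1 * c₁) ≤ 1 / (Real.exp 1 * c₁) ∧
    c₁ * (β / (2 * Real.exp 1 * c₁ * Real.log (Real.exp 1 * c₁ * c₂ / β))) *
        Real.log (c₂ / (β / (2 * Real.exp 1 * c₁ * Real.log (Real.exp 1 * c₁ * c₂ / β))))
      ≤ β := by
  obtain ⟨hβ0, hβ1⟩ := hβ
  have hc₁0 : 0 < c₁ := by linarith
  have hL : 1 ≤ log (exp 1 * c₁ * c₂ / β) := by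
    rw [mul_assoc, mul_div_assoc]
    exact one_le_log_exp_one_mul <|
      (one_le_div hβ0).2 (hβ1.trans (one_le_mul_of_one_le_of_one_le hc₁ hc₂))
  refine ⟨?_, ?_, mul_mul_log_div_le_of_log_pos hc₁0 (by linarith) hβ0 (by linarith)⟩
  · exact div_le_div_of_nonneg_left hβ0.le (by positivity)
      (le_mul_of_one_le_right (by positivity) hL)
  · rw [mul_assoc, div_mul_eq_div_div]
    gcongr
    linarith
end

section
/- Let γ ∈ [0,1), β ∈ (0,1), and let m, N be natural numbers with N ≥ (2m + 8·log(1/β))/(1−γ). If X is a random variable with the Binomial(N, 1−γ) distribution (the number of successes in N independent trials each succeeding with probability 1−γ), then P(X ≤ m) ≤ β. -/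
/-!
Chernoff's tilting argument. For `j ≤ m` we have `1 ≤ 2 ^ (m - j)`, so the lower tail is at most
`2 ^ m` times the full binomial sum with the success weight `p = 1 - γ` halved, which is
`2 ^ m (1 - p / 2) ^ N ≤ exp (m - p N / 2)`. The hypothesis on `N` makes this exponent at most
`-4 log (1 / β) ≤ log β`.
-/

open Finset

theorem sum_range_choose_mul_pow_le_add_pow {x y : ℝ} (hx : 0 ≤ x) (hy : 0 ≤ y) (m N : ℕ) :
    ∑ j ∈ range (m + 1), (N.choose j : ℝ) * x ^ j * y ^ (N - j) ≤ (x + y) ^ N := by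
  calc ∑ j ∈ range (m + 1), (N.choose j : ℝ) * x ^ j * y ^ (N - j)
      ≤ ∑ j ∈ range (m + N + 1), (N.choose j : ℝ) * x ^ j * y ^ (N - j) :=
        sum_le_sum_of_subset_of_nonneg (range_subset_range.mpr (by omega))
          fun j _ _ => by positivity
    _ = ∑ j ∈ range (N + 1), (N.choose j : ℝ) * x ^ j * y ^ (N - j) := by
        refine (sum_subset (range_subset_range.mpr (by omega)) fun j _ hj => ?_).symm
        rw [Nat.choose_eq_zero_of_lt (by simpa using hj), Nat.cast_zero, zero_mul, zero_mul]
    _ = (x + y) ^ N := by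
        rw [add_pow]
        exact sum_congr rfl fun j _ => by ring

theorem sum_range_choose_mul_pow_le_div_pow {p q t : ℝ} (hp : 0 ≤ p) (hq : 0 ≤ q)
    (ht₀ : 0 < t) (ht₁ : t ≤ 1) (m N : ℕ) :
    ∑ j ∈ range (m + 1), (N.choose j : ℝ) * p ^ j * q ^ (N - j) ≤ (t * p + q) ^ N / t ^ m := by
  rw [le_div_iff₀ (pow_pos ht₀ m), sum_mul]
  refine (sum_le_sum fun j hj => ?_).trans
    (sum_range_choose_mul_pow_le_add_pow (by positivity) hq m N)
  have htm : t ^ m ≤ t ^ j :=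
    pow_le_pow_of_le_one ht₀.le ht₁ (Nat.lt_succ_iff.mp (mem_range.mp hj))
  calc (N.choose j : ℝ) * p ^ j * q ^ (N - j) * t ^ m
      ≤ (N.choose j : ℝ) * p ^ j * q ^ (N - j) * t ^ j := by gcongr
    _ = (N.choose j : ℝ) * (t * p) ^ j * q ^ (N - j) := by ring

theorem two_pow_le_exp (m : ℕ) : (2 : ℝ) ^ m ≤ Real.exp m := by
  rw [← Real.exp_one_pow]
  exact pow_le_pow_left₀ zero_le_two (by linarith [Real.add_one_le_exp 1]) m

theorem binomial_tail_le
    (γ β : ℝ) (hγ : γ ∈ Set.Ico (0 : ℝ) 1) (hβ : β ∈ Set.Ioo (0 : ℝ) 1)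
    (m N : ℕ)
    (hN : (2 * m + 8 * Real.log (1 / β)) / (1 - γ) ≤ (N : ℝ)) :
    ∑ j ∈ Finset.range (m + 1),
        (N.choose j : ℝ) * (1 - γ) ^ j * γ ^ (N - j) ≤ β := by
  obtain ⟨hγ₀, hγ₁⟩ := hγ
  obtain ⟨hβ₀, hβ₁⟩ := hβ
  have hlog : 0 ≤ Real.log (1 / β) := Real.log_nonneg (by rw [le_div_iff₀ hβ₀]; linarith)
  have hpN : 2 * m + 8 * Real.log (1 / β) ≤ (1 - γ) * N := by
    rw [div_le_iff₀ (by linarith)] at hN; linarith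
  calc ∑ j ∈ range (m + 1), (N.choose j : ℝ) * (1 - γ) ^ j * γ ^ (N - j)
      ≤ (2⁻¹ * (1 - γ) + γ) ^ N / 2⁻¹ ^ m :=
        sum_range_choose_mul_pow_le_div_pow (by linarith) hγ₀ (by norm_num) (by norm_num) m N
    _ = 2 ^ m * (1 - (1 - γ) / 2) ^ N := by rw [inv_pow, div_inv_eq_mul]; ring
    _ ≤ Real.exp m * Real.exp (-((1 - γ) / 2)) ^ N := by
        have hq : 0 ≤ 1 - (1 - γ) / 2 := by linarith
        exact mul_le_mul (two_pow_le_exp m)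
          (pow_le_pow_left₀ hq (Real.one_sub_le_exp_neg _) N) (pow_nonneg hq N) (by positivity)
    _ = Real.exp (m - (1 - γ) * N / 2) := by
        rw [← Real.exp_nat_mul, ← Real.exp_add]; ring_nf
    _ ≤ Real.exp (Real.log β) := Real.exp_le_exp.mpr (by
        rw [one_div, Real.log_inv] at hlog hpN; linarith)
    _ = β := Real.exp_log hβ₀
end
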